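/- arXiv:1903.05515 — 2 statements merged into one kernel-verified Lean document; each statement's English description precedes it below -/
import Mathlib

section
/- If M is an infinite strongly minimal right R-module, then for every nonzero r ∈ R the following are equivalent: ann_M(r) is finite; M.r ≠ 0; M.r = M. -/
open FirstOrder Language Set

universe u v w x y

/-! ## Skew polynomial rings `K[t;φ]` -/

/-- `(R, ι, t)` realizes the skew polynomial ring `K[t;φ]` : the commutation rule
`a·t = t·a^φ` holds, and every element of `R` is uniquely a finite sum `∑ tⁱ·aᵢ`
with right-hand coefficients `aᵢ ∈ K`. -/
structure IsSkewPolyRing (K : Type u) [Field K] (φ : K →+* K) (R : Type v) [Ring R]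
    (ι : K →+* R) (t : R) : Prop where
  commute_rule : ∀ a : K, ι a * t = t * ι (φ a)
  unique_rep : ∀ r : R, ∃! c : ℕ →₀ K, r = c.sum fun i a => t ^ i * ι a

/-- Right scalar multiplication of a right `R`-module (i.e. a module over `Rᵐᵒᵖ`). -/
abbrev rsmul {R : Type v} [Ring R] {M : Type w} [AddCommGroup M] [Module Rᵐᵒᵖ M]
    (x : M) (r : R) : M :=
  MulOpposite.op r • x

/-- The set `M.r` is everything, i.e. `x ↦ x.r` is surjective, for every nonzero `r`:
`M` is a divisible right `R`-module. -/
def RDivisible (R : Type v) [Ring R] (M : Type w) [AddCommGroup M] [Module Rᵐᵒᵖ M] : Prop :=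
  ∀ r : R, r ≠ 0 → ∀ y : M, ∃ x : M, rsmul x r = y

/-- A subset `N` of `M` is divisible: `N.r = N` for every nonzero `r ∈ R`. -/
def RDivisibleIn (R : Type v) [Ring R] {M : Type w} [AddCommGroup M] [Module Rᵐᵒᵖ M]
    (N : Set M) : Prop :=
  ∀ r : R, r ≠ 0 → ∀ y ∈ N, ∃ x ∈ N, rsmul x r = y

/-- The torsion subset of a right `R`-module. -/
def torsionSet (R : Type v) [Ring R] (M : Type w) [AddCommGroup M] [Module Rᵐᵒᵖ M] :
    Set M :=
  {z : M | ∃ r : R, r ≠ 0 ∧ rsmul z r = 0}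

/-- `s ∈ R` is separable if it is not divisible by `t`. -/
def SeparablePoly {R : Type v} [Ring R] (t s : R) : Prop :=
  ¬ ∃ q : R, s = t * q

/-- `M = A ⊕ B` as an internal direct sum of subsets. -/
def IsInternalDirectSum {M : Type w} [AddCommGroup M] (A B : Set M) : Prop :=
  ∀ x : M, ∃! p : M × M, p.1 ∈ A ∧ p.2 ∈ B ∧ x = p.1 + p.2

/-- The quotient `R/rR` is a (skew) field: `rR` is a proper two-sided ideal and every
element not in `rR` is invertible modulo `rR`. -/
def QuotByIsDivisionRing (R : Type v) [Ring R] (r : R) : Prop :=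
  (¬ ∃ s : R, 1 = r * s) ∧
  (∀ a s : R, ∃ s' : R, a * (r * s) = r * s') ∧
  (∀ q : R, (¬ ∃ s : R, q = r * s) →
    ∃ q' : R, (∃ s : R, q * q' - 1 = r * s) ∧ (∃ s : R, q' * q - 1 = r * s))

/-! ## Languages -/

/-- The language of right `R`-modules: constant `0`, unary `-` and `·r` (`r ∈ R`),
binary `+`. -/
def modLang (R : Type v) : FirstOrder.Language.{v, 0} :=
  ⟨fun n => match n with
    | 0 => PUnit
    | 1 => Option R
    | 2 => PUnit
    | _ => PEmpty,
   fun _ => PEmpty⟩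

/-- The language of right `R`-modules together with a ternary relation symbol `C`. -/
def cModLang (R : Type v) : FirstOrder.Language.{v, 0} :=
  ⟨(modLang R).Functions,
   fun n => match n with
    | 3 => PUnit
    | _ => PEmpty⟩

/-- The pure language of a `C`-relation: a single ternary relation symbol. -/
def cLang : FirstOrder.Language.{0, 0} :=
  ⟨fun _ => PEmpty,
   fun n => match n with
    | 3 => PUnit
    | _ => PEmpty⟩

/-- The language `L_V = {<, ∞, (·r)_{r ∈ R}}` of `R`-chains. -/
def chainLang (R : Type v) : FirstOrder.Language.{v, 0} :=
  ⟨fun n => match n with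
    | 0 => PUnit
    | 1 => R
    | _ => PEmpty,
   fun n => match n with
    | 2 => PUnit
    | _ => PEmpty⟩

/-- The language `L'_V = L_V ∪ {Rₙ : n ∈ ℕ}` with additional unary predicates `Rₙ`. -/
def chainLang' (R : Type v) : FirstOrder.Language.{v, 0} :=
  ⟨(chainLang R).Functions,
   fun n => match n with
    | 1 => ℕ
    | 2 => PUnit
    | _ => PEmpty⟩

/-! ## Structures -/

/-- Any right `R`-module is a `modLang R`-structure. -/
instance modStructure (R : Type v) [Ring R] (M : Type w) [AddCommGroup M]
    [Module Rᵐᵒᵖ M] : (modLang R).Structure M where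
  funMap {n} f x :=
    match n, f, x with
    | 0, _, _ => 0
    | 1, none, x => -x 0
    | 1, some r, x => rsmul (x 0) r
    | 2, _, x => x 0 + x 1
    | _ + 3, f, _ => PEmpty.elim f
  RelMap {_} r _ := PEmpty.elim r

/-- A subset of `M` closed under the module operations. -/
structure SubmoduleSet (R : Type v) [Ring R] (M : Type w) [AddCommGroup M]
    [Module Rᵐᵒᵖ M] (N : Set M) : Prop where
  zero_mem : (0 : M) ∈ N
  add_mem : ∀ x y : M, x ∈ N → y ∈ N → x + y ∈ N
  neg_mem : ∀ x : M, x ∈ N → -x ∈ N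
  smul_mem : ∀ (r : R) (x : M), x ∈ N → rsmul x r ∈ N

/-- The `modLang R`-structure on a subset closed under the module operations. -/
def setModStructure (R : Type v) [Ring R] (M : Type w) [AddCommGroup M] [Module Rᵐᵒᵖ M]
    (N : Set M) (h : SubmoduleSet R M N) : (modLang R).Structure N where
  funMap {n} f x :=
    match n, f, x with
    | 0, _, _ => ⟨0, h.zero_mem⟩
    | 1, none, x => ⟨-(x 0 : M), h.neg_mem _ (x 0).2⟩
    | 1, some r, x => ⟨rsmul (x 0 : M) r, h.smul_mem r _ (x 0).2⟩
    | 2, _, x => ⟨(x 0 : M) + (x 1 : M), h.add_mem _ _ (x 0).2 (x 1).2⟩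
    | _ + 3, f, _ => PEmpty.elim f
  RelMap {_} r _ := PEmpty.elim r

/-- The `cModLang R`-structure on a right `R`-module endowed with a ternary relation `C`. -/
def cModStructure (R : Type v) [Ring R] (M : Type w) [AddCommGroup M] [Module Rᵐᵒᵖ M]
    (C : M → M → M → Prop) : (cModLang R).Structure M where
  funMap {n} f x :=
    match n, f, x with
    | 0, _, _ => 0
    | 1, none, x => -x 0
    | 1, some r, x => rsmul (x 0) r
    | 2, _, x => x 0 + x 1
    | _ + 3, f, _ => PEmpty.elim f
  RelMap {n} r x :=
    match n, r, x with
    | 3, _, x => C (x 0) (x 1) (x 2)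
    | 0, r, _ => PEmpty.elim r
    | 1, r, _ => PEmpty.elim r
    | 2, r, _ => PEmpty.elim r
    | _ + 4, r, _ => PEmpty.elim r

/-- The `cModLang R`-structure on a subset closed under the module operations, with a
ternary relation `C` restricted from the ambient module. -/
def cModStructureSet (R : Type v) [Ring R] (M : Type w) [AddCommGroup M] [Module Rᵐᵒᵖ M]
    (N : Set M) (h : SubmoduleSet R M N) (C : M → M → M → Prop) :
    (cModLang R).Structure N where
  funMap {n} f x :=
    match n, f, x with
    | 0, _, _ => ⟨0, h.zero_mem⟩
    | 1, none, x => ⟨-(x 0 : M), h.neg_mem _ (x 0).2⟩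
    | 1, some r, x => ⟨rsmul (x 0 : M) r, h.smul_mem r _ (x 0).2⟩
    | 2, _, x => ⟨(x 0 : M) + (x 1 : M), h.add_mem _ _ (x 0).2 (x 1).2⟩
    | _ + 3, f, _ => PEmpty.elim f
  RelMap {n} r x :=
    match n, r, x with
    | 3, _, x => C (x 0) (x 1) (x 2)
    | 0, r, _ => PEmpty.elim r
    | 1, r, _ => PEmpty.elim r
    | 2, r, _ => PEmpty.elim r
    | _ + 4, r, _ => PEmpty.elim r

/-- The `cLang`-structure determined by a ternary relation. -/
def cRelStructure (N : Type w) (C : N → N → N → Prop) : cLang.Structure N where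
  funMap {_} f _ := PEmpty.elim f
  RelMap {n} r x :=
    match n, r, x with
    | 3, _, x => C (x 0) (x 1) (x 2)
    | 0, r, _ => PEmpty.elim r
    | 1, r, _ => PEmpty.elim r
    | 2, r, _ => PEmpty.elim r
    | _ + 4, r, _ => PEmpty.elim r

/-- The `chainLang R`-structure (`L_V`-structure) on a chain `Δ` with maximum `infty`
and action `act` of `R`. -/
def chainStructure (R : Type v) [Ring R] (Δ : Type w) [LinearOrder Δ]
    (infty : Δ) (act : Δ → R → Δ) : (chainLang R).Structure Δ where
  funMap {n} f x :=
    match n, f, x with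
    | 0, _, _ => infty
    | 1, r, x => act (x 0) r
    | _ + 2, f, _ => PEmpty.elim f
  RelMap {n} r x :=
    match n, r, x with
    | 2, _, x => x 0 < x 1
    | 0, r, _ => PEmpty.elim r
    | 1, r, _ => PEmpty.elim r
    | _ + 3, r, _ => PEmpty.elim r

/-- The `chainLang' R`-structure (`L'_V`-structure) on the chain of a valued module:
the unary predicate `Rₙ` holds at `γ` iff `|M_{≥γ}/M_{>γ}| ≥ n`. -/
def chainStructure' (R : Type v) [Ring R] (M : Type w) [AddCommGroup M]
    (Δ : Type x) [LinearOrder Δ] (infty : Δ) (act : Δ → R → Δ) (v : M → Δ) :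
    (chainLang' R).Structure Δ where
  funMap {n} f x :=
    match n, f, x with
    | 0, _, _ => infty
    | 1, r, x => act (x 0) r
    | _ + 2, f, _ => PEmpty.elim f
  RelMap {n} r x :=
    match n, r, x with
    | 1, k, x =>
        ∃ f : Fin k → M, (∀ i, x 0 ≤ v (f i)) ∧ ∀ i j, i ≠ j → v (f i - f j) ≤ x 0
    | 2, _, x => x 0 < x 1
    | 0, r, _ => PEmpty.elim r
    | _ + 3, r, _ => PEmpty.elim r

/-- The `chainLang R`-structure on a subset of a chain closed under the action. -/
def chainStructureOn (R : Type v) [Ring R] (Δ : Type w) [LinearOrder Δ]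
    (infty : Δ) (act : Δ → R → Δ) (S : Set Δ)
    (h0 : infty ∈ S) (hcl : ∀ δ ∈ S, ∀ r : R, act δ r ∈ S) :
    (chainLang R).Structure S where
  funMap {n} f x :=
    match n, f, x with
    | 0, _, _ => ⟨infty, h0⟩
    | 1, r, x => ⟨act (x 0 : Δ) r, hcl _ (x 0).2 r⟩
    | _ + 2, f, _ => PEmpty.elim f
  RelMap {n} r x :=
    match n, r, x with
    | 2, _, x => (x 0 : Δ) < (x 1 : Δ)
    | 0, r, _ => PEmpty.elim r
    | 1, r, _ => PEmpty.elim r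
    | _ + 3, r, _ => PEmpty.elim r

/-! ## Minimality notions -/

/-- A structure is strongly minimal if in every elementarily equivalent structure,
every subset definable with parameters is finite or cofinite. -/
def StronglyMinimal (L : FirstOrder.Language.{u, v}) (M : Type w) [L.Structure M] : Prop :=
  ∀ (N : Type w) [L.Structure N],
    L.ElementarilyEquivalent M N →
      ∀ s : Set N, Set.Definable₁ (univ : Set N) L s → s.Finite ∨ sᶜ.Finite

/-- Strong minimality of a subset of a module, viewed as a right `R`-module in its own
right (for any witness that it is a submodule). -/
def StronglyMinimalSet (R : Type v) [Ring R] {M : Type w} [AddCommGroup M]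
    [Module Rᵐᵒᵖ M] (N : Set M) : Prop :=
  ∀ h : SubmoduleSet R M N,
    letI := setModStructure R M N h
    StronglyMinimal (modLang R) N

/-- A subset is quantifier-free definable, with parameters, using only the ternary
relation `C`. -/
def QFCDefinable {N : Type w} (C : N → N → N → Prop) (s : Set N) : Prop :=
  letI : cLang.Structure N := cRelStructure N C
  ∃ (k : ℕ) (φ : cLang.Formula (Fin k ⊕ Fin 1)) (c : Fin k → N),
    φ.IsQF ∧ s = {a : N | φ.Realize (Sum.elim c fun _ => a)}

/-- A structure in a language `L` with a distinguished ternary relation symbol `c` is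
`C`-minimal if in every elementarily equivalent structure, every subset definable with
parameters is quantifier-free definable using only the relation `C`. -/
def CMinimal (L : FirstOrder.Language.{u, v}) (c : L.Relations 3) (M : Type w) [L.Structure M] :
    Prop :=
  ∀ (N : Type w) [L.Structure N],
    L.ElementarilyEquivalent M N →
      ∀ s : Set N, Set.Definable₁ (univ : Set N) L s →
        QFCDefinable (fun a b d => Structure.RelMap c ![a, b, d]) s

/-- `C`-minimality of a subset of a module closed under the module operations,
with the `C`-relation restricted from the ambient module. -/
def CMinimalSet (R : Type v) [Ring R] (M : Type w) [AddCommGroup M] [Module Rᵐᵒᵖ M]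
    (N : Set M) (C : M → M → M → Prop) : Prop :=
  ∀ h : SubmoduleSet R M N,
    letI := cModStructureSet R M N h C
    CMinimal (cModLang R) PUnit.unit N

/-- A point or an interval in a linear order. -/
def IsIntervalOrPoint {Δ : Type w} [LinearOrder Δ] (s : Set Δ) : Prop :=
  (∃ a, s = {a}) ∨ (∃ a b, s = Ioo a b) ∨ (∃ a b, s = Ico a b) ∨ (∃ a b, s = Ioc a b) ∨
  (∃ a b, s = Icc a b) ∨ (∃ a, s = Ioi a) ∨ (∃ a, s = Ici a) ∨ (∃ a, s = Iio a) ∨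
  (∃ a, s = Iic a) ∨ s = univ ∨ s = ∅

/-- A linearly ordered structure is o-minimal if every subset definable with parameters
is a finite union of points and intervals. -/
def OMinimal (L : FirstOrder.Language.{u, v}) (Δ : Type w) [LinearOrder Δ] [L.Structure Δ] : Prop :=
  ∀ s : Set Δ, Set.Definable₁ (univ : Set Δ) L s →
    ∃ (n : ℕ) (f : Fin n → Set Δ), (∀ i, IsIntervalOrPoint (f i)) ∧ s = ⋃ i, f i

/-- o-minimality of a subset of a chain (closed under the action and containing `∞`),
as an `L_V`-structure. -/
def OMinimalChainOn (R : Type v) [Ring R] (Δ : Type w) [LinearOrder Δ]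
    (infty : Δ) (act : Δ → R → Δ) (S : Set Δ) : Prop :=
  ∀ (h0 : infty ∈ S) (hcl : ∀ δ ∈ S, ∀ r : R, act δ r ∈ S),
    letI := chainStructureOn R Δ infty act S h0 hcl
    OMinimal (chainLang R) S

/-! ## Valued `R`-modules -/

/-- `(M, Δ, infty, act, v)` is a valued right `R`-module over the skew polynomial ring
`R = K[t;φ]` (with `K` acting through `ι`): `Δ` is an `R`-chain with maximum `infty`
and `v` is a surjective valuation compatible with the action. -/
structure IsValuedRMod (K : Type u) [Field K] (φ : K →+* K) (R : Type v) [Ring R]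
    (ι : K →+* R) (t : R) (M : Type w) [AddCommGroup M] [Module Rᵐᵒᵖ M]
    (Δ : Type x) [LinearOrder Δ] (infty : Δ) (act : Δ → R → Δ) (v : M → Δ) : Prop where
  le_infty : ∀ γ : Δ, γ ≤ infty
  actK_strictMono : ∀ a : K, a ≠ 0 → ∀ γ δ : Δ, γ ≠ infty → δ ≠ infty → δ < γ →
    act δ (ι a) < act γ (ι a)
  actK_mul : ∀ a b : K, a ≠ 0 → b ≠ 0 → ∀ γ : Δ, γ ≠ infty →
    act γ (ι (a * b)) = act (act γ (ι a)) (ι b)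
  actK_expansive : ∀ a : K, a ≠ 0 → ∀ γ δ : Δ, γ ≠ infty → δ ≠ infty →
    γ < act γ (ι a) → δ < act δ (ι a)
  actK_add : ∀ a b : K, ∀ γ : Δ, γ ≠ infty →
    min (act γ (ι a)) (act γ (ι b)) ≤ act γ (ι (a + b))
  actK_sub : ∀ a b : K, ∀ γ : Δ, γ ≠ infty →
    min (act γ (ι a)) (act γ (ι b)) ≤ act γ (ι (a - b))
  act_zero : ∀ γ : Δ, act γ 0 = infty
  act_one : ∀ γ : Δ, act γ 1 = γ
  actK_infty : ∀ b : K, b ≠ 0 → act infty (ι b) = infty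
  act_t_strictMono : ∀ γ δ : Δ, γ ≠ infty → δ ≠ infty → δ < γ → act δ t < act γ t
  act_t_infty : act infty t = infty
  act_t_ne_infty : ∀ γ : Δ, γ ≠ infty → act γ t ≠ infty
  act_ta : ∀ (a : K) (γ : Δ), act γ (t * ι a) = act (act γ t) (ι a)
  act_tpow : ∀ (n : ℕ) (a : K) (γ : Δ),
    act γ (t ^ (n + 1) * ι a) = act (act γ (t ^ n)) (t * ι a)
  act_min : ∀ (c : ℕ →₀ K) (hc : c.support.Nonempty), ∀ γ : Δ, γ ≠ infty →
    act γ (c.sum fun i a => t ^ i * ι a) = c.support.inf' hc fun i => act γ (t ^ i * ι (c i))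
  act_monomial_lt : ∀ (m n : ℕ) (a b : K), a ≠ 0 → b ≠ 0 → n < m → ∀ γ : Δ, γ ≠ infty →
    act γ (t ^ m * ι a) ≤ act γ (t ^ n * ι b) →
    ∀ δ : Δ, δ < γ → act δ (t ^ m * ι a) < act δ (t ^ n * ι b)
  v_surjective : Function.Surjective v
  v_eq_infty_iff : ∀ z : M, v z = infty ↔ z = 0
  v_sub : ∀ z y : M, min (v z) (v y) ≤ v (z - y)
  v_smulK : ∀ (z : M) (a : K), v (rsmul z (ι a)) = act (v z) (ι a)
  v_smul_t : ∀ z : M, v (rsmul z t) = act (v z) t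

/-- The canonical `C`-relation of a valued module (additive convention):
`C(x,y,z) ⟺ v(x−y) = v(x−z) < v(y−z)`. -/
def Crel {M : Type w} [AddCommGroup M] {Δ : Type x} [LinearOrder Δ] (v : M → Δ)
    (a b c : M) : Prop :=
  v (a - b) = v (a - c) ∧ v (a - c) < v (b - c)

/-- `(M,v)` is trivially valued: `v` takes at most two values. -/
def TriviallyValued {M : Type w} [AddCommGroup M] {Δ : Type x} (v : M → Δ) : Prop :=
  ∀ a b : M, a ≠ 0 → b ≠ 0 → v a = v b

/-- `(M,v)` is `K`-trivially valued: `v(x.a) = v(x)` for every `a ∈ K^×`. -/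
def KTriviallyValued {K : Type u} [Field K] {R : Type v} [Ring R] (ι : K →+* R)
    {M : Type w} [AddCommGroup M] [Module Rᵐᵒᵖ M] {Δ : Type x} (v : M → Δ) : Prop :=
  ∀ (z : M) (a : K), a ≠ 0 → v (rsmul z (ι a)) = v z

/-- `M_{>θ} = {x | v(x.t) > v(x)}`. -/
def gtTheta {R : Type v} [Ring R] (t : R) {M : Type w} [AddCommGroup M] [Module Rᵐᵒᵖ M]
    {Δ : Type x} [LinearOrder Δ] (v : M → Δ) : Set M :=
  {z : M | v z < v (rsmul z t)}

/-- `M_{≥θ} = {x | v(x.t) ≥ v(x)}`. -/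
def geTheta {R : Type v} [Ring R] (t : R) {M : Type w} [AddCommGroup M] [Module Rᵐᵒᵖ M]
    {Δ : Type x} [LinearOrder Δ] (v : M → Δ) : Set M :=
  {z : M | v z ≤ v (rsmul z t)}

/-- `(M,v)` is henselian: for every separable `s`, `x ↦ x.s` is a bijection of `M_{>θ}`. -/
def HenselianVM {R : Type v} [Ring R] (t : R) {M : Type w} [AddCommGroup M]
    [Module Rᵐᵒᵖ M] {Δ : Type x} [LinearOrder Δ] (v : M → Δ) : Prop :=
  ∀ s : R, SeparablePoly t s →
    Set.BijOn (fun z : M => rsmul z s) (gtTheta t v) (gtTheta t v)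

/-- `B` is a subset of `S` of finite index (finitely many additive translates of `B`
cover `S`). -/
def HasFiniteIndexIn {M : Type w} [AddCommGroup M] (B S : Set M) : Prop :=
  B ⊆ S ∧ ∃ (n : ℕ) (a : Fin n → M), S ⊆ ⋃ i, (fun b => b + a i) '' B

/-- `S` contains a ball (centered at `0`, of radius `≠ ∞`) of finite index in `S`. -/
def ContainsBallFiniteIndex {M : Type w} [AddCommGroup M] {Δ : Type x} [LinearOrder Δ]
    (v : M → Δ) (infty : Δ) (S : Set M) : Prop :=
  ∃ γ : Δ, γ ≠ infty ∧
    (HasFiniteIndexIn {z : M | γ ≤ v z} S ∨ HasFiniteIndexIn {z : M | γ < v z} S)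

/-- `(M,v)` is residually divisible and affinely maximal: for every nonzero `r ∈ R` and
`z ∈ M` there is `y` with `y.r = z` and `v(y.r) = v(y)·r`. -/
def ResDivAffMax {R : Type v} [Ring R] {M : Type w} [AddCommGroup M] [Module Rᵐᵒᵖ M]
    {Δ : Type x} (act : Δ → R → Δ) (v : M → Δ) : Prop :=
  ∀ r : R, r ≠ 0 → ∀ z : M, ∃ y : M, rsmul y r = z ∧ v (rsmul y r) = act (v y) r

/-! ## Valued fields as valued modules -/

/-- The valuation ring of a (multiplicative Krull) valuation. -/
def ValRing {F : Type u} {Γ₀ : Type v} [Field F] [LinearOrderedCommGroupWithZero Γ₀]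
    (v : Valuation F Γ₀) : Set F :=
  {z : F | v z ≤ 1}

/-- The canonical `C`-relation of a (multiplicatively written) valued field:
in additive notation, `C(x,y,z) ⟺ v(x−y) = v(x−z) < v(y−z)`. -/
def valC {F : Type u} {Γ₀ : Type v} [Field F] [LinearOrderedCommGroupWithZero Γ₀]
    (v : Valuation F Γ₀) (a b c : F) : Prop :=
  v (a - b) = v (a - c) ∧ v (b - c) < v (a - c)

/-- A valuation is henselian (Newton–Hensel approximation property on the valuation
ring). -/
def HenselianValuation {F : Type u} {Γ₀ : Type v} [Field F]
    [LinearOrderedCommGroupWithZero Γ₀] (v : Valuation F Γ₀) : Prop :=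
  ∀ P : Polynomial F, (∀ i, v (P.coeff i) ≤ 1) → ∀ a : F, v a ≤ 1 →
    v (P.eval a) < v (P.derivative.eval a) ^ 2 →
    ∃ b : F, v b ≤ 1 ∧ P.eval b = 0 ∧ v (b - a) < v (P.derivative.eval a)

/-- The residue field of `v` is finite. -/
def FiniteResidueField {F : Type u} {Γ₀ : Type v} [Field F]
    [LinearOrderedCommGroupWithZero Γ₀] (v : Valuation F Γ₀) : Prop :=
  ∃ n : ℕ, ∀ z : Fin (n + 1) → F, (∀ i, v (z i) ≤ 1) →
    ∃ i j, i ≠ j ∧ v (z i - z j) < 1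

/-- The residue field of `v` is `p`-closed: every nonzero additive polynomial
`∑ aᵢ X^{pⁱ}` over the residue field is surjective. -/
def PClosedResidue (p : ℕ) {F : Type u} {Γ₀ : Type v} [Field F]
    [LinearOrderedCommGroupWithZero Γ₀] (v : Valuation F Γ₀) : Prop :=
  ∀ (d : ℕ) (a : Fin (d + 1) → F), (∀ i, v (a i) ≤ 1) → (∃ i, v (a i) = 1) →
    ∀ z : F, v z ≤ 1 → ∃ y : F, v y ≤ 1 ∧ v ((∑ i, a i * y ^ p ^ (i : ℕ)) - z) < 1

/-- A field `k` of characteristic `p` is `p`-closed: every nonzero additive polynomial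
with coefficients in `k` is surjective on `k`. -/
def PClosedField (p : ℕ) (k : Type u) [Field k] : Prop :=
  ∀ (d : ℕ) (a : Fin (d + 1) → k), (∃ i, a i ≠ 0) →
    Function.Surjective fun z : k => ∑ i, a i * z ^ p ^ (i : ℕ)

/-- The value group of `v` is divisible. -/
def DivisibleValueGroup {F : Type u} {Γ₀ : Type v} [Field F]
    [LinearOrderedCommGroupWithZero Γ₀] (v : Valuation F Γ₀) : Prop :=
  ∀ z : F, z ≠ 0 → ∀ n : ℕ, 0 < n → ∃ y : F, y ≠ 0 ∧ v y ^ n = v z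

/-- `(F,v)` is algebraically maximal: it has no proper immediate algebraic extension. -/
def AlgebraicallyMaximal {F : Type u} {Γ₀ : Type v} [Field F]
    [LinearOrderedCommGroupWithZero Γ₀] (v : Valuation F Γ₀) : Prop :=
  ∀ (L : Type u) [Field L] [Algebra F L], Algebra.IsAlgebraic F L →
    ∀ w : Valuation L Γ₀,
      (∀ z : F, w (algebraMap F L z) = v z) →
      (∀ z : L, ∃ y : F, w z = v y) →
      (∀ z : L, w z ≤ 1 → ∃ y : F, w (z - algebraMap F L y) < 1) →
      Function.Surjective (algebraMap F L)

/-! ## Puiseux series -/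

/-- The set of Puiseux series over `k`, inside the Hahn series field `k((ℚ))`:
series whose support is contained in `(1/n)ℤ` for some `n ≥ 1`. -/
def PuiseuxSet (k : Type u) [Field k] : Set (HahnSeries ℚ k) :=
  {f | ∃ n : ℕ, 0 < n ∧ ∀ q ∈ f.support, ∃ m : ℤ, q = (m : ℚ) / (n : ℚ)}

/-- The ring of Puiseux series over `k`: the valuation ring of the field of Puiseux
series. -/
def PuiseuxValRing (k : Type u) [Field k] : Set (HahnSeries ℚ k) :=
  {f | f ∈ PuiseuxSet k ∧ ∀ q ∈ f.support, 0 ≤ q}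

/-- The canonical `C`-relation on Hahn series over `ℚ`, induced by the order valuation
(additive convention). -/
def hahnC {k : Type u} [Field k] (a b c : HahnSeries ℚ k) : Prop :=
  (a - b).orderTop = (a - c).orderTop ∧ (a - c).orderTop < (b - c).orderTop
/-! The kernel and the image of `x ↦ x.r` are definable subgroups of `M`. In an infinite
strongly minimal group a definable subgroup is finite or everything, since a proper subgroup
with finite complement would have an infinite coset inside that complement. A finite kernel
forces an infinite image (`M` is covered by the fibres), so `M.r = M`; and `M.r ≠ 0` rules out
kernel `= M`. -/

theorem AddSubgroup.eq_top_of_finite_compl {G : Type*} [AddGroup G] [Infinite G]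
    (H : AddSubgroup G) (h : (H : Set G)ᶜ.Finite) : H = ⊤ := by
  by_contra hH
  obtain ⟨a, -, ha⟩ := SetLike.exists_of_lt (lt_top_iff_ne_top.2 hH)
  have hH_inf : (H : Set G).Infinite := fun hfin =>
    Set.infinite_univ (by simpa only [Set.union_compl_self] using hfin.union h)
  refine (hH_inf.image (add_right_injective a).injOn) (h.subset ?_)
  rintro _ ⟨x, hx, rfl⟩ hax
  exact ha (by simpa using H.sub_mem hax hx)

theorem StronglyMinimal.finite_or_finite_compl {L : FirstOrder.Language.{u, v}}
    {M : Type w} [L.Structure M] (h : StronglyMinimal L M) {s : Set M}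
    (hs : Set.Definable₁ (univ : Set M) L s) : s.Finite ∨ sᶜ.Finite :=
  h M rfl s hs

theorem StronglyMinimal.finite_or_eq_top {L : FirstOrder.Language.{u, v}}
    {M : Type w} [AddGroup M] [Infinite M] [L.Structure M] (h : StronglyMinimal L M)
    (H : AddSubgroup M) (hH : Set.Definable₁ (univ : Set M) L (H : Set M)) :
    (H : Set M).Finite ∨ H = ⊤ :=
  (h.finite_or_finite_compl hH).imp_right H.eq_top_of_finite_compl

theorem AddMonoidHom.tfae_finite_ker {G G' : Type*} [AddGroup G] [AddGroup G'] [Infinite G]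
    [Nontrivial G'] (f : G →+ G') (hker : (f.ker : Set G).Finite ∨ f.ker = ⊤)
    (hrange : (f.range : Set G').Finite ∨ f.range = ⊤) :
    List.TFAE [(f.ker : Set G).Finite, ∃ x, f x ≠ 0, f.range = ⊤] := by
  tfae_have 1 → 3 := fun hfin => hrange.resolve_left fun hrfin =>
    not_finite_iff_infinite.2 ‹Infinite G›
      (f.finite_iff_finite_ker_range.2 ⟨hfin.to_subtype, hrfin.to_subtype⟩)
  tfae_have 3 → 2 := fun htop => by
    obtain ⟨y, hy⟩ := exists_ne (0 : G')
    obtain ⟨x, rfl⟩ := f.range_eq_top.1 htop y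
    exact ⟨x, hy⟩
  tfae_have 2 → 1 := fun ⟨x, hx⟩ => hker.resolve_right fun htop =>
    hx (f.mem_ker.1 (htop ▸ AddSubgroup.mem_top x))
  tfae_finish

section ModLang

variable {R : Type v} [Ring R] {M : Type w} [AddCommGroup M] [Module Rᵐᵒᵖ M]

theorem definable_setOf_rsmul_eq_zero (r : R) :
    Set.Definable₁ (univ : Set M) (modLang R) {z : M | rsmul z r = 0} := by
  refine Set.Definable.mono ?_ (empty_subset _)
  rw [Set.empty_definable_iff]
  refine ⟨Term.equal (Term.func (l := 1) (some r : (modLang R).Functions 1) ![Term.var 0])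
    (Term.func (l := 0) (PUnit.unit : (modLang R).Functions 0) ![]), ?_⟩
  ext x
  rfl

theorem definable_range_rsmul (r : R) :
    Set.Definable₁ (univ : Set M) (modLang R) (Set.range fun z : M => rsmul z r) := by
  refine Set.Definable.mono ?_ (empty_subset _)
  rw [Set.empty_definable_iff]
  refine ⟨BoundedFormula.ex (Term.bdEqual
      (Term.func (l := 1) (some r : (modLang R).Functions 1) ![Term.var (Sum.inr 0)])
      (Term.var (Sum.inl 0))), ?_⟩
  ext x
  simp only [mem_ofPred_eq, mem_range, Formula.Realize, BoundedFormula.realize_ex,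
    BoundedFormula.realize_bdEqual, Term.realize_var, Sum.elim_inl]
  rfl

end ModLang

theorem stmt_3_general (R : Type v) [Ring R]
    (M : Type w) [AddCommGroup M] [Module Rᵐᵒᵖ M] (hinf : Infinite M)
    (hsm : StronglyMinimal (modLang R) M) (r : R) :
    ({z : M | rsmul z r = 0}.Finite ↔ ∃ z : M, rsmul z r ≠ 0) ∧
    ((∃ z : M, rsmul z r ≠ 0) ↔ Set.range (fun z : M => rsmul z r) = univ) := by
  let f : M →+ M := DistribSMul.toAddMonoidHom M (MulOpposite.op r)
  have hker : (f.ker : Set M).Finite ∨ f.ker = ⊤ :=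
    hsm.finite_or_eq_top _ (definable_setOf_rsmul_eq_zero r)
  have hrange : (f.range : Set M).Finite ∨ f.range = ⊤ :=
    hsm.finite_or_eq_top _ (by rw [f.coe_range]; exact definable_range_rsmul r)
  have htfae := f.tfae_finite_ker hker hrange
  rw [f.range_eq_top, ← Set.range_eq_univ] at htfae
  exact ⟨htfae.out 0 1, htfae.out 1 2⟩

/-- in an infinite strongly minimal right `R`-module, for every nonzero
`r ∈ R`: `ann_M(r)` finite ↔ `M.r ≠ 0` ↔ `M.r = M`. -/
theorem stmt_3 (K : Type u) [Field K] (φ : K →+* K) (R : Type v) [Ring R]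
    (ι : K →+* R) (t : R) (hR : IsSkewPolyRing K φ R ι t)
    (M : Type w) [AddCommGroup M] [Module Rᵐᵒᵖ M] (hinf : Infinite M)
    (hsm : StronglyMinimal (modLang R) M) (r : R) (hr : r ≠ 0) :
    ({z : M | rsmul z r = 0}.Finite ↔ ∃ z : M, rsmul z r ≠ 0) ∧
    ((∃ z : M, rsmul z r ≠ 0) ↔ Set.range (fun z : M => rsmul z r) = univ) :=
  stmt_3_general R M hinf hsm r
end

section
/- Let (M,v) be a K-trivially valued, C-minimal, infinite R-module. If there exists a ∈ M with v(a) < θ (i.e., v(a.t) < v(a)), then M is divisible. -/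
open FirstOrder Language Set

universe u v w x y

/-!
Multiplication by `t` lowers every valuation below `v a`, so the value chain has no least
element, and since `K` acts trivially, `v (x.r) = v (x.t^(deg r)) ≤ v x` for all `x` of small
valuation. The subgroup `M.r` is definable, hence by `C`-minimality quantifier-free definable
from `C` with finitely many parameters. All elements of valuation far below the parameters are
`C`-isomorphic over them, so `M.r`, which contains such an element `x.r`, contains all of them;
a subgroup containing every element of valuation `< γ` is everything, as `y = w + (y - w)`.
-/

section Ultrametric

variable {G : Type*} [AddCommGroup G] {Δ : Type*} [LinearOrder Δ] {v : G → Δ}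
  (hv : ∀ z y : G, min (v z) (v y) ≤ v (z - y))
include hv

theorem v_le_v_zero (z : G) : v z ≤ v 0 := by
  simpa [sub_self] using hv z z

theorem v_neg (z : G) : v (-z) = v z := by
  have h₁ := hv 0 z
  have h₂ := hv 0 (-z)
  rw [min_eq_right (v_le_v_zero hv z), zero_sub] at h₁
  rw [min_eq_right (v_le_v_zero hv _), zero_sub, neg_neg] at h₂
  exact le_antisymm h₂ h₁

theorem min_le_v_add (z y : G) : min (v z) (v y) ≤ v (z + y) := by
  simpa [v_neg hv] using hv z (-y)

theorem v_add_eq_left_of_lt {z y : G} (h : v z < v y) : v (z + y) = v z := by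
  refine le_antisymm ?_ (by simpa [min_eq_left h.le] using min_le_v_add hv z y)
  have := hv (z + y) y
  rw [add_sub_cancel_right] at this
  exact (min_le_iff.1 this).resolve_right h.not_ge

theorem v_sub_eq_left_of_lt {z y : G} (h : v z < v y) : v (z - y) = v z := by
  rw [sub_eq_add_neg]
  exact v_add_eq_left_of_lt hv (by rwa [v_neg hv])

theorem v_sub_eq_right_of_lt {z y : G} (h : v z < v y) : v (y - z) = v z := by
  rw [← v_neg hv, neg_sub, v_sub_eq_left_of_lt hv h]

theorem lt_v_sum {ι : Type*} (s : Finset ι) (g : ι → G) {δ : Δ} (hδ : δ < v 0)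
    (hs : ∀ i ∈ s, δ < v (g i)) : δ < v (∑ i ∈ s, g i) := by
  classical
  induction s using Finset.induction_on with
  | empty => simpa using hδ
  | insert i s hi ih =>
    rw [Finset.sum_insert hi]
    refine (lt_min (hs i (s.mem_insert_self i)) (ih fun j hj => hs j ?_)).trans_le
      (min_le_v_add hv _ _)
    exact Finset.mem_insert_of_mem hj

theorem v_sum_eq_of_lt {ι : Type*} [DecidableEq ι] {s : Finset ι} {g : ι → G} {d : ι}
    (hd : d ∈ s) (hd0 : v (g d) < v 0) (hlt : ∀ i ∈ s, i ≠ d → v (g d) < v (g i)) :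
    v (∑ i ∈ s, g i) = v (g d) := by
  rw [← Finset.add_sum_erase s g hd]
  refine v_add_eq_left_of_lt hv (lt_v_sum hv _ g hd0 fun i hi => ?_)
  exact hlt i (Finset.mem_of_mem_erase hi) (Finset.ne_of_mem_erase hi)

theorem AddSubgroup.mem_of_forall_v_lt_mem (H : AddSubgroup G) {γ : Δ} {w : G} (hw : v w < γ)
    (hH : ∀ z, v z < γ → z ∈ H) (y : G) : y ∈ H := by
  by_cases hy : v y < γ
  · exact hH y hy
  have hyw : v (y - w) = v w := v_sub_eq_right_of_lt hv (hw.trans_le (not_lt.1 hy))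
  simpa using H.add_mem (hH w hw) (hH (y - w) (hyw ▸ hw))

end Ultrametric

namespace FirstOrder.Language.BoundedFormula

theorem IsQF.realize_iff_of_isAtomic {L : Language} {M : Type*} [L.Structure M] {α : Type*}
    {n : ℕ} {φ : L.BoundedFormula α n} (hφ : φ.IsQF) {e₁ e₂ : α → M} {xs₁ xs₂ : Fin n → M}
    (h : ∀ ψ : L.BoundedFormula α n, ψ.IsAtomic → (ψ.Realize e₁ xs₁ ↔ ψ.Realize e₂ xs₂)) :
    φ.Realize e₁ xs₁ ↔ φ.Realize e₂ xs₂ := by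
  induction hφ with
  | falsum => rfl
  | of_isAtomic hψ => exact h _ hψ
  | imp _ _ ih₁ ih₂ => simp only [realize_imp, ih₁, ih₂]

end FirstOrder.Language.BoundedFormula

section CLang

open BoundedFormula

theorem cLang_term_eq_var {α : Type*} (T : cLang.Term α) : ∃ i, T = Term.var i := by
  cases T with
  | var i => exact ⟨i, rfl⟩
  | func f _ => exact PEmpty.elim f

theorem cLang_realize_iff_of_isQF {N : Type*} (C : N → N → N → Prop) {α : Type*}
    {φ : cLang.Formula α} (hφ : φ.IsQF) {e₁ e₂ : α → N}
    (heq : ∀ i j, e₁ i = e₁ j ↔ e₂ i = e₂ j)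
    (hC : ∀ i j l, C (e₁ i) (e₁ j) (e₁ l) ↔ C (e₂ i) (e₂ j) (e₂ l)) :
    letI := cRelStructure N C
    φ.Realize e₁ ↔ φ.Realize e₂ := by
  let _ := cRelStructure N C
  have realize_var : ∀ T : cLang.Term (α ⊕ Fin 0),
      ∃ i, ∀ e : α → N, T.realize (Sum.elim e default) = e i := by
    intro T
    obtain ⟨i | i, rfl⟩ := cLang_term_eq_var T
    · exact ⟨i, fun _ => rfl⟩
    · exact i.elim0
  refine hφ.realize_iff_of_isAtomic fun ψ hψ => ?_
  cases hψ with
  | equal t₁ t₂ =>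
    obtain ⟨i, hi⟩ := realize_var t₁
    obtain ⟨j, hj⟩ := realize_var t₂
    simp only [realize_bdEqual, hi, hj, heq]
  | @rel l R ts =>
    rcases l with _ | _ | _ | _ | l
    · exact PEmpty.elim R
    · exact PEmpty.elim R
    · exact PEmpty.elim R
    · obtain ⟨i, hi⟩ := realize_var (ts 0)
      obtain ⟨j, hj⟩ := realize_var (ts 1)
      obtain ⟨k, hk⟩ := realize_var (ts 2)
      show C _ _ _ ↔ C _ _ _
      simp only [hi, hj, hk, hC]
    · exact PEmpty.elim R

end CLang

theorem strictMonoOn_update_id {α : Type*} [LinearOrder α] {a b γ : α} (ha : a < γ)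
    (hb : b < γ) : StrictMonoOn (Function.update id a b) (insert a (Set.Ici γ)) := by
  have fix : ∀ δ ∈ Set.Ici γ, Function.update id a b δ = δ := fun δ hδ =>
    Function.update_of_ne (ha.trans_le hδ).ne' _ _
  rintro δ (rfl | hδ) ε (rfl | hε) hlt
  · exact absurd hlt (lt_irrefl _)
  · rw [Function.update_self, fix ε hε]
    exact hb.trans_le hε
  · exact absurd (ha.trans_le hδ) hlt.not_gt
  · rwa [fix δ hδ, fix ε hε]

section FarBelow

variable {G : Type*} [AddCommGroup G] {Δ : Type*} [LinearOrder Δ] {v : G → Δ}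

theorem crel_iff_of_strictMonoOn {β : Type*} {w₁ w₂ : β → G} {g : Δ → Δ} {S : Set Δ}
    (hg : StrictMonoOn g S) (hS : ∀ i j, v (w₁ i - w₁ j) ∈ S)
    (hw : ∀ i j, v (w₂ i - w₂ j) = g (v (w₁ i - w₁ j))) (i j l : β) :
    Crel v (w₁ i) (w₁ j) (w₁ l) ↔ Crel v (w₂ i) (w₂ j) (w₂ l) := by
  simp only [Crel, hw, hg.eq_iff_eq (hS _ _) (hS _ _), hg.lt_iff_lt (hS _ _) (hS _ _)]

theorem eq_iff_of_strictMonoOn (hsep : ∀ z, v z = v 0 ↔ z = 0) {β : Type*} {w₁ w₂ : β → G}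
    {g : Δ → Δ} {S : Set Δ} (hg : StrictMonoOn g S) (hS : ∀ i j, v (w₁ i - w₁ j) ∈ S)
    (hw : ∀ i j, v (w₂ i - w₂ j) = g (v (w₁ i - w₁ j))) (i j : β) :
    w₁ i = w₁ j ↔ w₂ i = w₂ j := by
  have hg0 : g (v 0) = v 0 := by simpa using (hw i i).symm
  rw [← sub_eq_zero, ← sub_eq_zero (a := w₂ i), ← hsep, ← hsep, hw]
  nth_rw 2 [← hg0]
  exact (hg.eq_iff_eq (hS i j) (by simpa using hS i i)).symm

variable (hv : ∀ z y : G, min (v z) (v y) ≤ v (z - y))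
include hv

theorem v_sub_sumElim_eq_update {k : ℕ} (c : Fin k → G) {γ : Δ} (hc : ∀ i, γ < v (c i))
    (hcc : ∀ i j, γ < v (c i - c j)) (hγ : γ ≤ v 0) {x y : G} (hx : v x < γ) (hy : v y < γ)
    (i j : Fin k ⊕ Fin 1) :
    v (Sum.elim c (fun _ => x) i - Sum.elim c (fun _ => x) j) ∈ insert (v x) (Set.Ici γ) ∧
    v (Sum.elim c (fun _ => y) i - Sum.elim c (fun _ => y) j) =
      Function.update id (v x) (v y)
        (v (Sum.elim c (fun _ => x) i - Sum.elim c (fun _ => x) j)) := by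
  have hx' : ∀ {δ}, γ ≤ δ → δ ≠ v x := fun hδ => (hx.trans_le hδ).ne'
  rcases i with i | _ <;> rcases j with j | _ <;>
    simp only [Sum.elim_inl, Sum.elim_inr, sub_self]
  · exact ⟨Or.inr (hcc i j).le, by rw [Function.update_of_ne (hx' (hcc i j).le)]; rfl⟩
  · rw [v_sub_eq_right_of_lt hv (hx.trans (hc i)), v_sub_eq_right_of_lt hv (hy.trans (hc i)),
      Function.update_self]
    exact ⟨Set.mem_insert _ _, rfl⟩
  · rw [v_sub_eq_left_of_lt hv (hx.trans (hc j)), v_sub_eq_left_of_lt hv (hy.trans (hc j)),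
      Function.update_self]
    exact ⟨Set.mem_insert _ _, rfl⟩
  · exact ⟨Or.inr hγ, by rw [Function.update_of_ne (hx' hγ)]; rfl⟩

end FarBelow

open Filter in
theorem QFCDefinable.eventually_mem_iff {G : Type*} [AddCommGroup G] {Δ : Type*}
    [LinearOrder Δ] [NoMinOrder Δ] {v : G → Δ} (hv : ∀ z y : G, min (v z) (v y) ≤ v (z - y))
    (hsep : ∀ z, v z = v 0 ↔ z = 0) {D : Set G} (hD : QFCDefinable (Crel v) D) :
    ∀ᶠ γ in atBot, ∀ x y, v x < γ → v y < γ → (x ∈ D ↔ y ∈ D) := by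
  obtain ⟨k, φ, c, hφ, rfl⟩ := hD
  have hc : ∀ᶠ γ in atBot, ∀ i, γ < v (c i) :=
    eventually_all.2 fun i => eventually_lt_atBot _
  have hcc : ∀ᶠ γ in atBot, ∀ i j, γ < v (c i - c j) :=
    eventually_all.2 fun i => eventually_all.2 fun j => eventually_lt_atBot _
  filter_upwards [hc, hcc, eventually_le_atBot (v 0)] with γ hc hcc hγ x y hx hy
  -- the order embedding `update id (v x) (v y)` makes `(c, x)` and `(c, y)` `C`-isomorphic
  have hdist := v_sub_sumElim_eq_update hv c hc hcc hγ hx hy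
  have hg := strictMonoOn_update_id hx hy
  exact cLang_realize_iff_of_isQF _ hφ
    (eq_iff_of_strictMonoOn hsep hg (fun i j => (hdist i j).1) fun i j => (hdist i j).2)
    (crel_iff_of_strictMonoOn hg (fun i j => (hdist i j).1) fun i j => (hdist i j).2)

section RModule

variable {R : Type*} [Ring R] {M : Type*} [AddCommGroup M] [Module Rᵐᵒᵖ M]

theorem rsmul_mul (x : M) (r s : R) : rsmul x (r * s) = rsmul (rsmul x r) s := by
  simp only [rsmul, MulOpposite.op_mul, mul_smul]

theorem rsmul_one (x : M) : rsmul x (1 : R) = x := by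
  simp only [rsmul, MulOpposite.op_one, one_smul]

theorem definable₁_range_rsmul (C : M → M → M → Prop) (r : R) :
    letI := cModStructure R M C
    Set.Definable₁ (univ : Set M) (cModLang R) (Set.range fun w : M => rsmul w r) := by
  let _ := cModStructure R M C
  have h : (∅ : Set M).Definable (cModLang R)
      {x : Fin 1 → M | x 0 ∈ Set.range fun w : M => rsmul w r} := by
    refine (Set.empty_definable_iff).2 ⟨BoundedFormula.ex
      ((Term.func (L := cModLang R) (l := 1) (some r) fun _ => Term.var (Sum.inr 0)).bdEqual
        (Term.var (Sum.inl 0))), ?_⟩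
    ext
    simp only [Set.mem_ofPred_eq, Set.mem_range, Formula.Realize, BoundedFormula.realize_ex,
      BoundedFormula.realize_bdEqual, Term.realize, Sum.elim_inl, Sum.elim_inr]
    rfl
  exact h.mono (Set.empty_subset _)

end RModule

namespace IsValuedRMod

variable {K : Type*} [Field K] {φ : K →+* K} {R : Type*} [Ring R] {ι : K →+* R} {t : R}
  {M : Type*} [AddCommGroup M] [Module Rᵐᵒᵖ M] {Δ : Type*} [LinearOrder Δ] {infty : Δ}
  {act : Δ → R → Δ} {v : M → Δ} (hV : IsValuedRMod K φ R ι t M Δ infty act v)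
include hV

theorem v_zero : v 0 = infty := (hV.v_eq_infty_iff 0).2 rfl

theorem v_eq_v_zero_iff (z : M) : v z = v 0 ↔ z = 0 := hV.v_zero ▸ hV.v_eq_infty_iff z

theorem act_t_lt_of_lt {a : M} (ha : v (rsmul a t) < v a) {δ : Δ} (hδ : δ < v a) :
    act δ t < δ := by
  have ha0 : v a ≠ infty := fun h => by
    rw [(hV.v_eq_infty_iff a).1 h, rsmul, smul_zero] at ha
    exact lt_irrefl _ ha
  have hmono := hV.act_monomial_lt 1 0 1 1 one_ne_zero one_ne_zero zero_lt_one (v a) ha0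
  simp only [pow_one, pow_zero, map_one, mul_one, hV.act_one] at hmono
  simpa [hV.act_one] using hmono (by rw [← hV.v_smul_t]; exact ha.le) δ hδ

theorem noMinOrder {a : M} (ha : v (rsmul a t) < v a) : NoMinOrder Δ where
  exists_lt γ := by
    rcases lt_or_ge γ (v a) with h | h
    · exact ⟨act γ t, hV.act_t_lt_of_lt ha h⟩
    · exact ⟨v (rsmul a t), ha.trans_le h⟩

theorem strictAnti_v_rsmul_pow {a x : M} (ha : v (rsmul a t) < v a) (hx : v x < v a) :
    StrictAnti fun n => v (rsmul x (t ^ n)) := by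
  have hsucc : ∀ n, v (rsmul x (t ^ (n + 1))) = act (v (rsmul x (t ^ n))) t := fun n => by
    rw [pow_succ, rsmul_mul, hV.v_smul_t]
  have hlt : ∀ n, v (rsmul x (t ^ n)) < v a := by
    intro n
    induction n with
    | zero => rwa [pow_zero, rsmul_one]
    | succ n ih => exact (hsucc n ▸ hV.act_t_lt_of_lt ha ih).trans ih
  exact strictAnti_nat_of_succ_lt fun n => hsucc n ▸ hV.act_t_lt_of_lt ha (hlt n)

theorem v_rsmul_le (hR : IsSkewPolyRing K φ R ι t) (hK : KTriviallyValued ι v) {a x : M}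
    (ha : v (rsmul a t) < v a) (hx : v x < v a) {r : R} (hr : r ≠ 0) :
    v (rsmul x r) ≤ v x := by
  classical
  obtain ⟨c, rfl, -⟩ := hR.unique_rep r
  have hc : c.support.Nonempty := Finsupp.support_nonempty_iff.2 fun h => hr (by simp [h])
  set d := c.support.max' hc
  have hd : d ∈ c.support := c.support.max'_mem hc
  have hanti := hV.strictAnti_v_rsmul_pow ha hx
  have hterm : ∀ i ∈ c.support, v (rsmul x (t ^ i * ι (c i))) = v (rsmul x (t ^ i)) :=
    fun i hi => by rw [rsmul_mul, hK _ _ (Finsupp.mem_support_iff.1 hi)]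
  have hsum : rsmul x (c.sum fun i a => t ^ i * ι a) =
      ∑ i ∈ c.support, rsmul x (t ^ i * ι (c i)) := by
    simp only [rsmul, Finsupp.sum, Finset.op_sum, Finset.sum_smul]
  have hxd : v (rsmul x (t ^ d)) ≤ v x := by
    simpa [rsmul_one] using hanti.antitone (Nat.zero_le d)
  calc v (rsmul x (c.sum fun i a => t ^ i * ι a)) = v (rsmul x (t ^ d)) := by
        rw [hsum, v_sum_eq_of_lt hV.v_sub hd, hterm d hd]
        · rw [hterm d hd]
          exact hxd.trans_lt (hx.trans_le (v_le_v_zero hV.v_sub a))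
        · intro i hi hne
          rw [hterm d hd, hterm i hi]
          exact hanti (lt_of_le_of_ne (c.support.le_max' i hi) hne)
    _ ≤ v x := hxd

end IsValuedRMod

theorem stmt_11_general (K : Type u) [Field K] (φ : K →+* K) (R : Type v) [Ring R]
    (ι : K →+* R) (t : R) (hR : IsSkewPolyRing K φ R ι t)
    (M : Type w) [AddCommGroup M] [Module Rᵐᵒᵖ M]
    (Δ : Type x) [LinearOrder Δ] (infty : Δ) (act : Δ → R → Δ) (v : M → Δ)
    (hV : IsValuedRMod K φ R ι t M Δ infty act v)
    (hKtriv : KTriviallyValued ι v)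
    (hcmin : @CMinimal (cModLang R) PUnit.unit M (cModStructure R M (Crel v)))
    (a : M) (ha : v (rsmul a t) < v a) :
    RDivisible R M := by
  have := hV.noMinOrder ha
  have : Nonempty Δ := ⟨infty⟩
  intro r hr y
  let H := (DistribSMul.toAddMonoidHom M (MulOpposite.op r)).range
  have hH : QFCDefinable (Crel v) (H : Set M) := by
    rw [AddMonoidHom.coe_range]
    exact @hcmin M (cModStructure R M (Crel v)) rfl _ (definable₁_range_rsmul (Crel v) r)
  obtain ⟨γ, hconst, hγa⟩ := ((hH.eventually_mem_iff hV.v_sub hV.v_eq_v_zero_iff).and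
    (Filter.eventually_lt_atBot (v a))).exists
  obtain ⟨δ, hδ⟩ := exists_lt γ
  obtain ⟨x, rfl⟩ := hV.v_surjective δ
  have hxr : v (rsmul x r) < γ := (hV.v_rsmul_le hR hKtriv ha (hδ.trans hγa) hr).trans_lt hδ
  have hball : ∀ z, v z < γ → z ∈ H := fun z hz => (hconst _ _ hxr hz).1 ⟨x, rfl⟩
  exact H.mem_of_forall_v_lt_mem hV.v_sub hδ hball y

/-- a `K`-trivially valued, `C`-minimal, infinite `R`-module containing
an element of valuation `< θ` is divisible. -/
theorem stmt_11 (K : Type u) [Field K] (φ : K →+* K) (R : Type v) [Ring R]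
    (ι : K →+* R) (t : R) (hR : IsSkewPolyRing K φ R ι t)
    (M : Type w) [AddCommGroup M] [Module Rᵐᵒᵖ M]
    (Δ : Type x) [LinearOrder Δ] (infty : Δ) (act : Δ → R → Δ) (v : M → Δ)
    (hV : IsValuedRMod K φ R ι t M Δ infty act v)
    (hinf : Infinite M)
    (hKtriv : KTriviallyValued ι v)
    (hcmin : @CMinimal (cModLang R) PUnit.unit M (cModStructure R M (Crel v)))
    (a : M) (ha : v (rsmul a t) < v a) :
    RDivisible R M :=
  stmt_11_general K φ R ι t hR M Δ infty act v hV hKtriv hcmin a ha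
end
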